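/- Assume the abc Conjecture. Then for every real η > 0 there exists a constant C > 0 such that for all real X ≥ 2, the total number of pairs (x, y) of integers with x ≥ 1 and 1 ≤ |x^11 − y^2| ≤ X is at most C · (X^(13/22) + X^(4/9 + η)). -/

import Mathlib

open Real

/-- The radical of a natural number: the product of its distinct prime factors. -/
def rad (n : ℕ) : ℕ := ∏ p ∈ n.primeFactors, p

/-- The abc Conjecture: for every ε > 0 there is a constant `C > 0` such that for all
nonzero coprime integers `a`, `b`, `c` with `a + b = c` one has
`|c| ≤ C * rad(abc)^(1+ε)`. -/
def ABCConjecture : Prop :=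
  ∀ ε : ℝ, 0 < ε → ∃ C : ℝ, 0 < C ∧ ∀ a b c : ℤ,
    a ≠ 0 → b ≠ 0 → c ≠ 0 → IsCoprime a b → a + b = c →
    ((|c| : ℤ) : ℝ) ≤ C * (rad (a * b * c).natAbs : ℝ) ^ (1 + ε)

open Finset

/-!
Split the pairs `(x, y)` according to whether `x¹¹ ≤ X`. There are at most `X^(1/11)` such `x`,
each with `O(√X)` values of `y`, since `y² ≤ 2X`: `O(X^(13/22))` pairs. When `x¹¹ > X`, `|y|` lies
in `[√(x¹¹ - X), √(x¹¹ + X)]`, an interval of length at most `2X x^(-11/2)`; summed over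
`x > X^(1/11)` this is again `O(X^(13/22))`, plus one pair per value of `x`. Finally, abc applied to
`y² + (x¹¹ - y²) = x¹¹`, whose radical divides `y (x¹¹ - y²) x` and so is `O(X x^(13/2))`, gives
`x^((9 - 13ε)/2) = O(X^(2+ε))`; hence only `O(X^(4/9+η))` values of `x` occur.
-/

lemma rad_pos (n : ℕ) : 0 < rad n :=
  prod_pos fun _ hp => (Nat.prime_of_mem_primeFactors hp).pos

lemma rad_le_self {n : ℕ} (hn : n ≠ 0) : rad n ≤ n :=
  Nat.le_of_dvd (Nat.pos_of_ne_zero hn) (Nat.prod_primeFactors_dvd n)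

lemma rad_le_rad_of_dvd {m n : ℕ} (h : m ∣ n) (hn : n ≠ 0) : rad m ≤ rad n :=
  Nat.le_of_dvd (rad_pos n) (prod_dvd_prod_of_subset _ _ _ (Nat.primeFactors_mono h hn))

lemma rad_pow (n : ℕ) {k : ℕ} (hk : k ≠ 0) : rad (n ^ k) = rad n := by
  rw [rad, Nat.primeFactors_pow n hk, rad]

lemma rad_le_of_dvd_pow {m n k : ℕ} (h : m ∣ n ^ k) (hn : n ≠ 0) (hk : k ≠ 0) : rad m ≤ n :=
  calc rad m ≤ rad (n ^ k) := rad_le_rad_of_dvd h (pow_ne_zero k hn)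
    _ = rad n := rad_pow n hk
    _ ≤ n := rad_le_self hn

lemma rad_natAbs_sq_mul_mul_pow_le {y d x : ℤ} (h : y * d * x ≠ 0) :
    rad (y ^ 2 * d * x ^ 11).natAbs ≤ (y * d * x).natAbs :=
  rad_le_of_dvd_pow (k := 11)
    (by rw [← Int.natAbs_pow, Int.natAbs_dvd_natAbs]; exact ⟨y ^ 9 * d ^ 10, by ring⟩)
    (Int.natAbs_ne_zero.mpr h) (by norm_num)

-- Dividing out `gcd a b` extends the abc inequality to triples that need not be coprime.
theorem ABCConjecture.exists_abs_le_gcd_mul (habc : ABCConjecture) {ε : ℝ} (hε : 0 < ε) :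
    ∃ C : ℝ, 0 < C ∧ ∀ a b c : ℤ, a ≠ 0 → b ≠ 0 → c ≠ 0 → a + b = c →
      ((|c| : ℤ) : ℝ) ≤ C * Int.gcd a b * (rad (a * b * c).natAbs : ℝ) ^ (1 + ε) := by
  obtain ⟨C, hC, hC_abc⟩ := habc ε hε
  refine ⟨C, hC, fun a b c ha hb hc hsum => ?_⟩
  obtain ⟨g, a', b', -, hcop, rfl, rfl⟩ := Int.exists_gcd_one' (Int.gcd_pos_of_ne_zero_left b ha)
  subst hsum
  have hgcd : Int.gcd (a' * g) (b' * g) = g := by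
    rw [Int.gcd_mul_right, hcop, one_mul, Int.natAbs_natCast]
  have ha' : a' ≠ 0 := left_ne_zero_of_mul ha
  have hb' : b' ≠ 0 := left_ne_zero_of_mul hb
  have hc' : a' + b' ≠ 0 := by rintro h; simp [← add_mul, h] at hc
  have hrad : rad (a' * b' * (a' + b')).natAbs ≤
      rad (a' * g * (b' * g) * (a' * g + b' * g)).natAbs :=
    rad_le_rad_of_dvd (Int.natAbs_dvd_natAbs.mpr ⟨g ^ 3, by ring⟩)
      (Int.natAbs_ne_zero.mpr (mul_ne_zero (mul_ne_zero ha hb) hc))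
  have key := hC_abc a' b' (a' + b') ha' hb' hc' (Int.isCoprime_iff_gcd_eq_one.mpr hcop) rfl
  rw [hgcd, ← add_mul, abs_mul, Int.cast_mul, Nat.abs_cast, Int.cast_natCast]
  calc ((|a' + b'| : ℤ) : ℝ) * g ≤ C * (rad (a' * b' * (a' + b')).natAbs : ℝ) ^ (1 + ε) * g :=
        mul_le_mul_of_nonneg_right key (Nat.cast_nonneg g)
    _ ≤ C * (rad (a' * g * (b' * g) * (a' * g + b' * g)).natAbs : ℝ) ^ (1 + ε) * g := by
        gcongr
    _ = _ := by rw [← add_mul]; ring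

lemma le_mul_rpow_of_pow_le {x X C ε γ : ℝ} (hx : 1 ≤ x) (hX : 1 ≤ X) (hC : 0 ≤ C)
    (hε : 13 * ε < 9) (hγ : 2 * (2 + ε) ≤ γ * (9 - 13 * ε))
    (h : x ^ 11 ≤ C * X * (2 * X * x ^ (13 / 2 : ℝ)) ^ (1 + ε)) :
    x ≤ (2 ^ (1 + ε) * C) ^ ((9 - 13 * ε) / 2)⁻¹ * X ^ γ := by
  set β := (9 - 13 * ε) / 2 with hβ_def
  have hβ : 0 < β := by linarith
  have hx0 : 0 < x := by linarith
  have hX0 : 0 < X := by linarith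
  have hP : 0 < x ^ (13 / 2 * (1 + ε)) := rpow_pos_of_pos hx0 _
  have hsplit : x ^ 11 = x ^ β * x ^ (13 / 2 * (1 + ε)) := by
    rw [← rpow_add hx0, ← rpow_natCast]; congr 1; push_cast; ring
  have hexpand : C * X * (2 * X * x ^ (13 / 2 : ℝ)) ^ (1 + ε)
      = 2 ^ (1 + ε) * C * X ^ (2 + ε) * x ^ (13 / 2 * (1 + ε)) := by
    have hX2 : X ^ (2 + ε) = X * X ^ (1 + ε) := by
      rw [show 2 + ε = 1 + (1 + ε) by ring, rpow_add hX0 1, rpow_one]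
    rw [mul_rpow (by positivity) (by positivity), mul_rpow zero_le_two hX0.le,
      ← rpow_mul hx0.le, hX2]
    ring
  have hxβ : x ^ β ≤ 2 ^ (1 + ε) * C * X ^ (2 + ε) :=
    le_of_mul_le_mul_right (by rwa [hsplit, hexpand] at h) hP
  have hexp : (2 + ε) * β⁻¹ ≤ γ := by
    rw [← div_eq_mul_inv, div_le_iff₀ hβ, hβ_def]; linarith
  calc x ≤ (2 ^ (1 + ε) * C * X ^ (2 + ε)) ^ β⁻¹ :=
        (le_rpow_inv_iff_of_pos hx0.le (by positivity) hβ).mpr hxβ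
    _ = (2 ^ (1 + ε) * C) ^ β⁻¹ * X ^ ((2 + ε) * β⁻¹) := by
        rw [mul_rpow (by positivity) (by positivity), ← rpow_mul hX0.le]
    _ ≤ (2 ^ (1 + ε) * C) ^ β⁻¹ * X ^ γ := by gcongr

lemma pow_le_of_abs_sub_sq_le {C ε X : ℝ} (hC : 0 < C) (hε : 0 < ε)
    (hC_abc : ∀ a b c : ℤ, a ≠ 0 → b ≠ 0 → c ≠ 0 → a + b = c →
      ((|c| : ℤ) : ℝ) ≤ C * Int.gcd a b * (rad (a * b * c).natAbs : ℝ) ^ (1 + ε))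
    {x y : ℤ} (hx : 1 ≤ x) (hd : 1 ≤ |x ^ 11 - y ^ 2|) (hdX : ((|x ^ 11 - y ^ 2| : ℤ) : ℝ) ≤ X)
    (hxX : X < (x : ℝ) ^ 11) :
    (x : ℝ) ^ 11 ≤ C * X * (2 * X * (x : ℝ) ^ (13 / 2 : ℝ)) ^ (1 + ε) := by
  set d := x ^ 11 - y ^ 2 with hd_def
  have hx0 : (0 : ℝ) < x := by exact_mod_cast hx
  have hd0 : d ≠ 0 := by rintro h; simp [h] at hd
  have hdX' : |(d : ℝ)| ≤ X := by rwa [← Int.cast_abs]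
  have hdR : (d : ℝ) = (x : ℝ) ^ 11 - (y : ℝ) ^ 2 := by push_cast [hd_def]; ring
  have hy0 : y ≠ 0 := by
    rintro rfl
    rw [hdR, abs_of_pos (by simpa using pow_pos hx0 11)] at hdX'
    simp at hdX'; linarith
  have hy : |(y : ℝ)| ≤ 2 * (x : ℝ) ^ (11 / 2 : ℝ) := by
    have hsq : ((x : ℝ) ^ (11 / 2 : ℝ)) ^ 2 = (x : ℝ) ^ 11 := by
      rw [← rpow_natCast, ← rpow_mul hx0.le]; norm_num
    refine abs_le_of_sq_le_sq ?_ (by positivity)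
    rw [mul_pow, hsq]
    nlinarith [abs_le.mp hdX', pow_pos hx0 11]
  have hgcd : (Int.gcd (y ^ 2) d : ℝ) ≤ X :=
    calc (Int.gcd (y ^ 2) d : ℝ) ≤ d.natAbs := by exact_mod_cast Int.gcd_le_natAbs_right _ hd0
      _ = |(d : ℝ)| := by rw [Nat.cast_natAbs, Int.cast_abs]
      _ ≤ X := hdX'
  have hrad : (rad (y ^ 2 * d * x ^ 11).natAbs : ℝ) ≤ 2 * X * (x : ℝ) ^ (13 / 2 : ℝ) := by
    have hyd : y * d * x ≠ 0 := mul_ne_zero (mul_ne_zero hy0 hd0) (by omega)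
    calc (rad (y ^ 2 * d * x ^ 11).natAbs : ℝ) ≤ (y * d * x).natAbs := by
          exact_mod_cast rad_natAbs_sq_mul_mul_pow_le hyd
      _ = |(y : ℝ)| * |(d : ℝ)| * x := by
          rw [Nat.cast_natAbs]; push_cast; rw [abs_mul, abs_mul, abs_of_pos hx0]
      _ ≤ 2 * (x : ℝ) ^ (11 / 2 : ℝ) * X * x := by gcongr
      _ = 2 * X * (x : ℝ) ^ (13 / 2 : ℝ) := by
          rw [show (13 / 2 : ℝ) = 11 / 2 + 1 by norm_num, rpow_add_one hx0.ne']; ring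
  have hX0 : 0 ≤ X := (Nat.cast_nonneg _).trans hgcd
  calc (x : ℝ) ^ 11 = ((|x ^ 11| : ℤ) : ℝ) := by push_cast; rw [abs_of_pos (pow_pos hx0 11)]
    _ ≤ C * Int.gcd (y ^ 2) d * (rad (y ^ 2 * d * x ^ 11).natAbs : ℝ) ^ (1 + ε) :=
        hC_abc _ _ _ (pow_ne_zero 2 hy0) hd0 (pow_ne_zero 11 (by omega)) (by ring)
    _ ≤ C * X * (2 * X * (x : ℝ) ^ (13 / 2 : ℝ)) ^ (1 + ε) := by gcongr

theorem ABCConjecture.exists_le_rpow (habc : ABCConjecture) {γ : ℝ} (hγ : 4 / 9 < γ) :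
    ∃ K : ℝ, 0 < K ∧ ∀ X : ℝ, 1 ≤ X → ∀ x y : ℤ, 1 ≤ x → 1 ≤ |x ^ 11 - y ^ 2| →
      ((|x ^ 11 - y ^ 2| : ℤ) : ℝ) ≤ X → X < (x : ℝ) ^ 11 → (x : ℝ) ≤ K * X ^ γ := by
  -- the exponent `ε` for which `le_mul_rpow_of_pow_le` yields exactly `X ^ γ`
  set ε := (9 * γ - 4) / (2 + 13 * γ) with hε_def
  have hγ0 : 0 < 2 + 13 * γ := by linarith
  have hε : 0 < ε := div_pos (by linarith) hγ0
  have hε9 : 13 * ε < 9 := by rw [hε_def, div_eq_mul_inv]; field_simp; linarith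
  have hγε : 2 * (2 + ε) ≤ γ * (9 - 13 * ε) := by rw [hε_def]; field_simp; nlinarith
  obtain ⟨C, hC, hC_abc⟩ := habc.exists_abs_le_gcd_mul hε
  exact ⟨(2 ^ (1 + ε) * C) ^ ((9 - 13 * ε) / 2)⁻¹, by positivity,
    fun X hX x y hx hd hdX hxX => le_mul_rpow_of_pow_le (by exact_mod_cast hx) hX hC.le hε9 hγε
      (pow_le_of_abs_sub_sq_le hC hε hC_abc hx hd hdX hxX)⟩

theorem Set.ncard_le_sum_ncard_fiber {α β : Type*} {S : Set (α × β)} {s : Finset α}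
    (hS : ∀ p ∈ S, p.1 ∈ s) (hfin : ∀ a ∈ s, {b | (a, b) ∈ S}.Finite) :
    S.ncard ≤ ∑ a ∈ s, {b | (a, b) ∈ S}.ncard := by
  have hsub : S ⊆ ⋃ a ∈ s, Prod.mk a '' {b | (a, b) ∈ S} :=
    fun p hp => Set.mem_biUnion (hS p hp) ⟨p.2, hp, rfl⟩
  calc S.ncard ≤ (⋃ a ∈ s, Prod.mk a '' {b | (a, b) ∈ S}).ncard :=
        Set.ncard_le_ncard hsub (s.finite_toSet.biUnion fun a ha => (hfin a ha).image _)
    _ ≤ ∑ a ∈ s, (Prod.mk a '' {b | (a, b) ∈ S}).ncard := s.set_ncard_biUnion_le _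
    _ = ∑ a ∈ s, {b | (a, b) ∈ S}.ncard :=
        sum_congr rfl fun a _ => Set.ncard_image_of_injective _ (Prod.mk_right_injective a)

lemma Int.setOf_abs_mem_Icc_subset (u v : ℝ) :
    {y : ℤ | u ≤ |(y : ℝ)| ∧ |(y : ℝ)| ≤ v} ⊆
      ↑(Icc ⌈u⌉ ⌊v⌋ ∪ (Icc ⌈u⌉ ⌊v⌋).image Neg.neg) := by
  rintro y ⟨hu, hv⟩
  have hy : |y| ∈ Icc ⌈u⌉ ⌊v⌋ := by
    rw [mem_Icc, Int.ceil_le, Int.le_floor, Int.cast_abs]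
    exact ⟨hu, hv⟩
  rcases abs_choice y with h | h
  · exact mem_union_left _ (h ▸ hy)
  · exact mem_union_right _ (mem_image.mpr ⟨|y|, hy, by rw [h, neg_neg]⟩)

lemma Int.finite_setOf_abs_mem_Icc (u v : ℝ) : {y : ℤ | u ≤ |(y : ℝ)| ∧ |(y : ℝ)| ≤ v}.Finite :=
  (finite_toSet _).subset (Int.setOf_abs_mem_Icc_subset u v)

lemma Int.card_Icc_ceil_floor_le {u v : ℝ} (huv : u ≤ v + 1) :
    (#(Icc ⌈u⌉ ⌊v⌋) : ℝ) ≤ v - u + 1 := by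
  rw [Int.card_Icc, ← Int.cast_natCast, Int.toNat_eq_max, Int.cast_max]
  push_cast
  exact max_le (by linarith [Int.floor_le v, Int.le_ceil u]) (by linarith)

lemma Int.ncard_setOf_abs_mem_Icc_le {u v : ℝ} (huv : u ≤ v) :
    ({y : ℤ | u ≤ |(y : ℝ)| ∧ |(y : ℝ)| ≤ v}.ncard : ℝ) ≤ 2 * (v - u) + 2 := by
  set I := Icc ⌈u⌉ ⌊v⌋
  have hcard : {y : ℤ | u ≤ |(y : ℝ)| ∧ |(y : ℝ)| ≤ v}.ncard ≤ #I + #I :=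
    calc _ ≤ #(I ∪ I.image Neg.neg) := by
          rw [← Set.ncard_coe_finset]
          exact Set.ncard_le_ncard (Int.setOf_abs_mem_Icc_subset u v)
      _ ≤ #I + #(I.image Neg.neg) := card_union_le _ _
      _ ≤ #I + #I := Nat.add_le_add_left card_image_le _
  have hI := Int.card_Icc_ceil_floor_le (u := u) (v := v) (by linarith)
  calc ({y : ℤ | u ≤ |(y : ℝ)| ∧ |(y : ℝ)| ≤ v}.ncard : ℝ) ≤ #I + #I := by exact_mod_cast hcard
    _ ≤ 2 * (v - u) + 2 := by linarith

lemma abs_mem_Icc_sqrt_of_abs_sub_sq_le {N X y : ℝ} (h : |N - y ^ 2| ≤ X) :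
    √(N - X) ≤ |y| ∧ |y| ≤ √(N + X) := by
  obtain ⟨h₁, h₂⟩ := abs_le.mp h
  rw [← sqrt_sq_eq_abs]
  exact ⟨sqrt_le_sqrt (by linarith), sqrt_le_sqrt (by linarith)⟩

lemma Int.finite_setOf_abs_sub_sq_le (N X : ℝ) : {y : ℤ | |N - (y : ℝ) ^ 2| ≤ X}.Finite :=
  (Int.finite_setOf_abs_mem_Icc (√(N - X)) (√(N + X))).subset
    fun _ hy => abs_mem_Icc_sqrt_of_abs_sub_sq_le hy

lemma Int.ncard_setOf_abs_sub_sq_le {N X : ℝ} (hX : 0 ≤ X) :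
    ({y : ℤ | |N - (y : ℝ) ^ 2| ≤ X}.ncard : ℝ) ≤ 2 * (√(N + X) - √(N - X)) + 2 :=
  have hsub : {y : ℤ | |N - (y : ℝ) ^ 2| ≤ X} ⊆
      {y : ℤ | √(N - X) ≤ |(y : ℝ)| ∧ |(y : ℝ)| ≤ √(N + X)} :=
    fun _ hy => abs_mem_Icc_sqrt_of_abs_sub_sq_le hy
  le_trans (by exact_mod_cast Set.ncard_le_ncard hsub (Int.finite_setOf_abs_mem_Icc _ _))
    (Int.ncard_setOf_abs_mem_Icc_le (sqrt_le_sqrt (by linarith)))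

lemma sqrt_add_sub_sqrt_sub_le {N X : ℝ} (hX : 0 ≤ X) (hXN : X ≤ N) (hN : 0 < N) :
    √(N + X) - √(N - X) ≤ 2 * X / √N := by
  have hp := sq_sqrt (show 0 ≤ N + X by linarith)
  have hq := sq_sqrt (show 0 ≤ N - X by linarith)
  have hpN : √N ≤ √(N + X) := sqrt_le_sqrt (by linarith)
  have hqp : √(N - X) ≤ √(N + X) := sqrt_le_sqrt (by linarith)
  rw [le_div_iff₀ (sqrt_pos.mpr hN)]
  nlinarith [mul_le_mul_of_nonneg_left (le_add_of_le_of_nonneg hpN (sqrt_nonneg (N - X)))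
    (sub_nonneg.mpr hqp)]

lemma Nat.le_floor_rpow_inv_iff {X : ℝ} (hX : 0 ≤ X) {k : ℕ} (hk : k ≠ 0) (n : ℕ) :
    n ≤ ⌊X ^ (k⁻¹ : ℝ)⌋₊ ↔ (n : ℝ) ^ k ≤ X := by
  rw [Nat.le_floor_iff (by positivity),
    le_rpow_inv_iff_of_pos (Nat.cast_nonneg n) hX (by positivity), rpow_natCast]

lemma sum_Ioc_rpow_neg_le {s : ℝ} (hs : 2 ≤ s) (a b : ℕ) :
    ∑ n ∈ Ioc a b, (n : ℝ) ^ (-s) ≤ 2 * ((a : ℝ) + 1) ^ (1 - s) := by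
  have ha : (0 : ℝ) < a + 1 := by positivity
  have hterm : ∀ n ∈ Ioc a b, (n : ℝ) ^ (-s) ≤ ((a : ℝ) + 1) ^ (2 - s) * ((n : ℝ) ^ 2)⁻¹ := by
    intro n hn
    have hn1 : (a : ℝ) + 1 ≤ n := by exact_mod_cast (mem_Ioc.mp hn).1
    have hn0 : (0 : ℝ) < n := by linarith
    calc (n : ℝ) ^ (-s) = (n : ℝ) ^ (2 - s) * ((n : ℝ) ^ 2)⁻¹ := by
          rw [← rpow_natCast, ← rpow_neg hn0.le, ← rpow_add hn0]; congr 1; push_cast; ring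
      _ ≤ ((a : ℝ) + 1) ^ (2 - s) * ((n : ℝ) ^ 2)⁻¹ := by
          exact mul_le_mul_of_nonneg_right (rpow_le_rpow_of_nonpos ha hn1 (by linarith))
            (by positivity)
  have hIoo : ∑ n ∈ Ioc a b, ((n : ℝ) ^ 2)⁻¹ ≤ 2 / ((a : ℝ) + 1) :=
    calc ∑ n ∈ Ioc a b, ((n : ℝ) ^ 2)⁻¹ ≤ ∑ n ∈ Ioo a (b + 1), ((n : ℝ) ^ 2)⁻¹ :=
          sum_le_sum_of_subset_of_nonneg
            (fun n hn => by simp only [mem_Ioc, mem_Ioo] at hn ⊢; omega) fun _ _ _ => by positivity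
      _ ≤ 2 / ((a : ℝ) + 1) := sum_Ioo_inv_sq_le a (b + 1)
  calc ∑ n ∈ Ioc a b, (n : ℝ) ^ (-s) ≤ ∑ n ∈ Ioc a b, ((a : ℝ) + 1) ^ (2 - s) * ((n : ℝ) ^ 2)⁻¹ :=
        sum_le_sum hterm
    _ ≤ ((a : ℝ) + 1) ^ (2 - s) * (2 / ((a : ℝ) + 1)) := by
        rw [← mul_sum]; gcongr
    _ = 2 * ((a : ℝ) + 1) ^ (1 - s) := by
        rw [show 2 - s = 1 - s + 1 by ring, rpow_add_one ha.ne']; field_simp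

/-- The set counted by `N₂(X)`. -/
def N2Set (X : ℝ) : Set (ℤ × ℤ) :=
  {p : ℤ × ℤ | 1 ≤ p.1 ∧ 1 ≤ |p.1 ^ 11 - p.2 ^ 2| ∧ ((|p.1 ^ 11 - p.2 ^ 2| : ℤ) : ℝ) ≤ X}

lemma setOf_mem_N2Set_subset (X : ℝ) (x : ℤ) :
    {y | (x, y) ∈ N2Set X} ⊆ {y : ℤ | |(x : ℝ) ^ 11 - (y : ℝ) ^ 2| ≤ X} := by
  rintro y ⟨-, -, hy⟩
  simpa using hy

lemma ncard_fiber_N2Set_le {X : ℝ} (hX : 0 ≤ X) (x : ℤ) :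
    ({y | (x, y) ∈ N2Set X}.ncard : ℝ) ≤ 2 * (√((x : ℝ) ^ 11 + X) - √((x : ℝ) ^ 11 - X)) + 2 :=
  have h := Set.ncard_le_ncard (setOf_mem_N2Set_subset X x) (Int.finite_setOf_abs_sub_sq_le _ _)
  le_trans (by exact_mod_cast h) (Int.ncard_setOf_abs_sub_sq_le hX)

lemma ncard_fiber_N2Set_le_of_pow_le {X : ℝ} (hX : 0 ≤ X) {x : ℤ} (hx : (x : ℝ) ^ 11 ≤ X) :
    ({y | (x, y) ∈ N2Set X}.ncard : ℝ) ≤ 2 * √(2 * X) + 2 := by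
  have h₁ : √((x : ℝ) ^ 11 + X) ≤ √(2 * X) := sqrt_le_sqrt (by linarith)
  linarith [ncard_fiber_N2Set_le hX x, sqrt_nonneg ((x : ℝ) ^ 11 - X)]

lemma ncard_fiber_N2Set_le_of_lt_pow {X : ℝ} (hX : 0 ≤ X) {x : ℤ} (hx : 0 < x)
    (hxX : X < (x : ℝ) ^ 11) :
    ({y | (x, y) ∈ N2Set X}.ncard : ℝ) ≤ 4 * X * (x : ℝ) ^ (-(11 / 2) : ℝ) + 2 := by
  have hx0 : (0 : ℝ) < x := by exact_mod_cast hx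
  have hsqrt : √((x : ℝ) ^ 11) = (x : ℝ) ^ (11 / 2 : ℝ) := by
    rw [sqrt_eq_rpow, ← rpow_natCast, ← rpow_mul hx0.le]; norm_num
  have h := sqrt_add_sub_sqrt_sub_le hX hxX.le (by positivity)
  rw [hsqrt, div_eq_mul_inv, ← rpow_neg hx0.le] at h
  linarith [ncard_fiber_N2Set_le hX x]

lemma ncard_N2Set_le {X B : ℝ} (hX : 0 ≤ X)
    (hB : ∀ p ∈ N2Set X, X < (p.1 : ℝ) ^ 11 → (p.1 : ℝ) ≤ B) :
    ((N2Set X).ncard : ℝ) ≤ ∑ _n ∈ Icc 1 ⌊X ^ (1 / 11 : ℝ)⌋₊, (2 * √(2 * X) + 2)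
      + ∑ n ∈ Ioc ⌊X ^ (1 / 11 : ℝ)⌋₊ ⌊B⌋₊, (4 * X * (n : ℝ) ^ (-(11 / 2) : ℝ) + 2) := by
  set A := ⌊X ^ (1 / 11 : ℝ)⌋₊
  have hA (n : ℕ) : n ≤ A ↔ (n : ℝ) ^ 11 ≤ X := by
    have h := Nat.le_floor_rpow_inv_iff hX (k := 11) (by norm_num) n
    rwa [show ((11 : ℕ) : ℝ)⁻¹ = 1 / 11 by norm_num] at h
  have hS : ∀ p ∈ N2Set X, p.1 ∈ (Icc 1 A ∪ Ioc A ⌊B⌋₊).map Nat.castEmbedding := by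
    rintro ⟨x, y⟩ hp
    obtain ⟨n, rfl⟩ := Int.eq_ofNat_of_zero_le (by linarith [hp.1] : 0 ≤ x)
    refine mem_map_of_mem Nat.castEmbedding ?_
    have hn : 1 ≤ n := by have h : (1 : ℤ) ≤ n := hp.1; exact_mod_cast h
    by_cases hnA : n ≤ A
    · exact mem_union_left _ (mem_Icc.mpr ⟨hn, hnA⟩)
    · have hlt : X < (n : ℝ) ^ 11 := lt_of_not_ge (mt (hA n).mpr hnA)
      refine mem_union_right _ (mem_Ioc.mpr ⟨lt_of_not_ge hnA, Nat.le_floor ?_⟩)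
      simpa using hB _ hp (by simpa using hlt)
  have hfin : ∀ x ∈ (Icc 1 A ∪ Ioc A ⌊B⌋₊).map Nat.castEmbedding, {y | (x, y) ∈ N2Set X}.Finite :=
    fun x _ => (Int.finite_setOf_abs_sub_sq_le _ _).subset (setOf_mem_N2Set_subset X x)
  have hdisj : Disjoint (Icc 1 A) (Ioc A ⌊B⌋₊) :=
    disjoint_left.mpr fun n h₁ h₂ => by simp only [mem_Icc, mem_Ioc] at h₁ h₂; omega
  calc ((N2Set X).ncard : ℝ)
      ≤ ∑ x ∈ (Icc 1 A ∪ Ioc A ⌊B⌋₊).map Nat.castEmbedding, ({y | (x, y) ∈ N2Set X}.ncard : ℝ) := by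
        exact_mod_cast Set.ncard_le_sum_ncard_fiber hS hfin
    _ = ∑ n ∈ Icc 1 A, ({y | ((n : ℤ), y) ∈ N2Set X}.ncard : ℝ)
        + ∑ n ∈ Ioc A ⌊B⌋₊, ({y | ((n : ℤ), y) ∈ N2Set X}.ncard : ℝ) := by
        rw [sum_map, sum_union hdisj]; rfl
    _ ≤ _ := by
        gcongr with n hn n hn
        · exact ncard_fiber_N2Set_le_of_pow_le hX (by simpa using (hA n).mp (mem_Icc.mp hn).2)
        · have hnA := (mem_Ioc.mp hn).1
          have hn0 : 0 < (n : ℤ) := by omega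
          simpa using ncard_fiber_N2Set_le_of_lt_pow hX hn0
            (by simpa using lt_of_not_ge (mt (hA n).mpr (by omega)))

lemma sum_Icc_floor_rpow_le {X : ℝ} (hX : 1 ≤ X) :
    ∑ _n ∈ Icc 1 ⌊X ^ (1 / 11 : ℝ)⌋₊, (2 * √(2 * X) + 2) ≤ 6 * X ^ (13 / 22 : ℝ) := by
  have hX0 : 0 < X := by linarith
  rw [sum_const, Nat.card_Icc, add_tsub_cancel_right, nsmul_eq_mul]
  have hA : (⌊X ^ (1 / 11 : ℝ)⌋₊ : ℝ) ≤ X ^ (1 / 11 : ℝ) := Nat.floor_le (by positivity)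
  have h2X : √(2 * X) ≤ 2 * √X := by
    rw [sqrt_le_iff, mul_pow, sq_sqrt hX0.le]; exact ⟨by positivity, by linarith⟩
  have h1 : 1 ≤ √X := one_le_sqrt.mpr hX
  calc (⌊X ^ (1 / 11 : ℝ)⌋₊ : ℝ) * (2 * √(2 * X) + 2) ≤ X ^ (1 / 11 : ℝ) * (6 * √X) :=
        mul_le_mul hA (by linarith) (by positivity) (by positivity)
    _ = 6 * X ^ (13 / 22 : ℝ) := by
        rw [sqrt_eq_rpow, mul_left_comm, ← rpow_add hX0]; norm_num

lemma sum_Ioc_floor_rpow_le {X : ℝ} (hX : 0 < X) (M : ℕ) :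
    ∑ n ∈ Ioc ⌊X ^ (1 / 11 : ℝ)⌋₊ M, (4 * X * (n : ℝ) ^ (-(11 / 2) : ℝ) + 2)
      ≤ 8 * X ^ (13 / 22 : ℝ) + 2 * M := by
  set A := ⌊X ^ (1 / 11 : ℝ)⌋₊
  rw [sum_add_distrib, ← mul_sum, sum_const, Nat.card_Ioc, nsmul_eq_mul]
  have htail := sum_Ioc_rpow_neg_le (s := 11 / 2) (by norm_num) A M
  have hpow : ((A : ℝ) + 1) ^ (1 - 11 / 2 : ℝ) ≤ X ^ (-(9 / 22) : ℝ) :=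
    calc ((A : ℝ) + 1) ^ (1 - 11 / 2 : ℝ) ≤ (X ^ (1 / 11 : ℝ)) ^ (1 - 11 / 2 : ℝ) :=
          rpow_le_rpow_of_nonpos (by positivity) (Nat.lt_floor_add_one _).le (by norm_num)
      _ = X ^ (-(9 / 22) : ℝ) := by rw [← rpow_mul hX.le]; norm_num
  have hX13 : X ^ (13 / 22 : ℝ) = X * X ^ (-(9 / 22) : ℝ) := by
    rw [show (13 / 22 : ℝ) = 1 + -(9 / 22) by norm_num, rpow_add hX, rpow_one]
  have hM : ((M - A : ℕ) : ℝ) ≤ M := by exact_mod_cast Nat.sub_le M A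
  calc 4 * X * ∑ n ∈ Ioc A M, (n : ℝ) ^ (-(11 / 2) : ℝ) + ((M - A : ℕ) : ℝ) * 2
      ≤ 4 * X * (2 * X ^ (-(9 / 22) : ℝ)) + 2 * M :=
        add_le_add (by gcongr; linarith) (by linarith)
    _ = 8 * X ^ (13 / 22 : ℝ) + 2 * M := by rw [hX13]; ring

theorem abc_implies_N2_bound (habc : ABCConjecture) :
    ∀ η : ℝ, 0 < η → ∃ C : ℝ, 0 < C ∧ ∀ X : ℝ, 2 ≤ X →
      (Set.ncard {p : ℤ × ℤ | 1 ≤ p.1 ∧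
          1 ≤ |p.1 ^ 11 - p.2 ^ 2| ∧ ((|p.1 ^ 11 - p.2 ^ 2| : ℤ) : ℝ) ≤ X} : ℝ)
        ≤ C * (X ^ ((13 : ℝ) / 22) + X ^ ((4 : ℝ) / 9 + η)) := by
  intro η hη
  obtain ⟨K, hK, hbound⟩ := habc.exists_le_rpow (γ := 4 / 9 + η) (by linarith)
  refine ⟨14 + 2 * K, by positivity, fun X hX => ?_⟩
  have hX1 : 1 ≤ X := by linarith
  have hB : ∀ p ∈ N2Set X, X < (p.1 : ℝ) ^ 11 → (p.1 : ℝ) ≤ K * X ^ ((4 : ℝ) / 9 + η) :=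
    fun p hp => hbound X hX1 p.1 p.2 hp.1 hp.2.1 hp.2.2
  have h₁ : 0 ≤ X ^ ((13 : ℝ) / 22) := by positivity
  have h₂ : 0 ≤ X ^ ((4 : ℝ) / 9 + η) := by positivity
  calc ((N2Set X).ncard : ℝ)
      ≤ 6 * X ^ ((13 : ℝ) / 22) + (8 * X ^ ((13 : ℝ) / 22) + 2 * ⌊K * X ^ ((4 : ℝ) / 9 + η)⌋₊) :=
        (ncard_N2Set_le (by linarith) hB).trans
          (add_le_add (sum_Icc_floor_rpow_le hX1) (sum_Ioc_floor_rpow_le (by linarith) _))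
    _ ≤ 6 * X ^ ((13 : ℝ) / 22) + (8 * X ^ ((13 : ℝ) / 22) + 2 * (K * X ^ ((4 : ℝ) / 9 + η))) := by
        gcongr; exact Nat.floor_le (by positivity)
    _ ≤ (14 + 2 * K) * (X ^ ((13 : ℝ) / 22) + X ^ ((4 : ℝ) / 9 + η)) := by nlinarith
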